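/- (Lemma 1.) Let P and Q be probability measures on a measurable space X × Y and let h be a classifier whose loss function L satisfies 0 ≤ L(h(x), y) ≤ C for all (x, y). Then the expected error of h under P is bounded by ε_P(h) ≤ ε_Q(h) + √2 · C · (D_JS(P ‖ Q))^{1/2}. -/

import Mathlib

open MeasureTheory
open scoped ENNReal

open Classical in
/-- Kullback–Leibler divergence `D_KL(P ‖ Q)`, valued in `ℝ≥0∞`:
it is `∫ log (dP/dQ) dP` when `P ≪ Q` and the log-likelihood ratio is integrable,
and `∞` otherwise. -/
noncomputable def klDiv {α : Type*} [MeasurableSpace α] (P Q : Measure α) : ℝ≥0∞ :=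
  if P ≪ Q ∧ Integrable (llr P Q) P then ENNReal.ofReal (∫ x, llr P Q x ∂P) else ⊤

/-- Jensen–Shannon divergence:
`D_JS(P ‖ Q) = (1/2) D_KL(P ‖ M) + (1/2) D_KL(Q ‖ M)` with `M = (1/2)(P + Q)`. -/
noncomputable def jsDiv {α : Type*} [MeasurableSpace α] (P Q : Measure α) : ℝ≥0∞ :=
  2⁻¹ * klDiv P ((2 : ℝ≥0∞)⁻¹ • (P + Q)) + 2⁻¹ * klDiv Q ((2 : ℝ≥0∞)⁻¹ • (P + Q))

/-- Expected error `ε_P(h) = E_{(x,y)∼P}[L(h(x), y)]` of a classifier `h : X → 𝓟`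
under a distribution `P` on `X × Y`, for a loss `L : 𝓟 → Y → ℝ`. -/
noncomputable def expErr {X Y 𝓟 : Type*} [MeasurableSpace X] [MeasurableSpace Y]
    (L : 𝓟 → Y → ℝ) (P : Measure (X × Y)) (h : X → 𝓟) : ℝ :=
  ∫ z, L (h z.1) z.2 ∂P

/-!
Write `M = (P + Q) / 2` and `u = dP/dM`, `v = dQ/dM`, so that `u + v = 2` and `0 ≤ u, v ≤ 2`.
For a loss `g` with values in `[0, C]`, `ε_P - ε_Q = ∫ (u - v) g dM ≤ (C / 2) ∫ |u - v| dM`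
because `∫ (u - v) dM = 0`. By Jensen, `(∫ |u - v| dM)² ≤ ∫ (u - v)² dM`, and the elementary
inequality `t² ≤ klFun (1 + t) + klFun (1 - t)` on `[-1, 1]` (with `klFun x = x log x + 1 - x`),
applied at `t = u - 1`, bounds `∫ (u - v)² dM` by
`4 (D_KL(P ‖ M) + D_KL(Q ‖ M)) = 8 D_JS(P ‖ Q)`.
-/

open Real
open InformationTheory (klFun continuous_klFun measurable_klFun hasDerivAt_klFun klFun_one)

lemma two_mul_le_log_one_add_sub_log_one_sub {t : ℝ} (h0 : 0 ≤ t) (h1 : t < 1) :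
    2 * t ≤ log (1 + t) - log (1 - t) := by
  have hsum := hasSum_log_sub_log_of_abs_lt_one (x := t) (by rwa [abs_of_nonneg h0])
  simpa using le_hasSum hsum 0 fun k _ => by positivity

lemma sq_le_klFun_one_add_add_klFun_one_sub {t : ℝ} (ht : |t| ≤ 1) :
    t ^ 2 ≤ klFun (1 + t) + klFun (1 - t) := by
  wlog h0 : 0 ≤ t generalizing t
  · have := this (t := -t) (by rwa [abs_neg]) (by linarith)
    rw [neg_sq, ← sub_eq_add_neg, sub_neg_eq_add] at this
    linarith
  set φ : ℝ → ℝ := fun s => klFun (1 + s) + klFun (1 - s) - s ^ 2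
  have hderiv : ∀ s ∈ interior (Set.Icc (0 : ℝ) 1),
      HasDerivWithinAt φ (log (1 + s) - log (1 - s) - 2 * s) (interior (Set.Icc 0 1)) s := by
    intro s hs
    rw [interior_Icc] at hs
    have h₁ := (hasDerivAt_klFun (x := 1 + s) (by linarith [hs.1])).comp_const_add 1 s
    have h₂ := (hasDerivAt_klFun (x := 1 - s) (by linarith [hs.2])).comp_const_sub 1 s
    exact (((h₁.add h₂).sub (hasDerivAt_pow 2 s)).congr_deriv (by norm_num; ring)).hasDerivWithinAt
  have hmono : MonotoneOn φ (Set.Icc 0 1) :=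
    monotoneOn_of_hasDerivWithinAt_nonneg (convex_Icc 0 1) (by fun_prop) hderiv fun s hs => by
      rw [interior_Icc] at hs
      linarith [two_mul_le_log_one_add_sub_log_one_sub hs.1.le hs.2]
  simpa [φ, klFun_one] using hmono ⟨le_rfl, zero_le_one⟩ ⟨h0, (le_abs_self t).trans ht⟩ h0

section

variable {α : Type*} [MeasurableSpace α]

-- Mathlib's `klDiv` adds the mass correction `Q.real univ - P.real univ`, zero here.
lemma klDiv_eq_informationTheory_klDiv (P Q : Measure α)
    [IsProbabilityMeasure P] [IsProbabilityMeasure Q] :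
    klDiv P Q = InformationTheory.klDiv P Q := by
  by_cases h : P ≪ Q ∧ Integrable (llr P Q) P
  · rw [klDiv, if_pos h, InformationTheory.klDiv_of_ac_of_integrable h.1 h.2]
    simp
  · rw [klDiv, if_neg h, eq_comm, InformationTheory.klDiv_eq_top_iff]
    tauto

lemma integrable_klFun_rnDeriv_of_le {P Q : Measure α}
    [IsFiniteMeasure P] [IsFiniteMeasure Q] {c : ℝ}
    (hc : ∀ᵐ x ∂Q, (P.rnDeriv Q x).toReal ≤ c) :
    Integrable (fun x => klFun (P.rnDeriv Q x).toReal) Q := by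
  obtain ⟨B, hB⟩ := isCompact_Icc.exists_bound_of_continuousOn
    (continuous_klFun.continuousOn (s := Set.Icc 0 c))
  refine Integrable.of_bound
    (measurable_klFun.comp (Measure.measurable_rnDeriv P Q).ennreal_toReal).aestronglyMeasurable B ?_
  filter_upwards [hc] with x hx using hB _ ⟨ENNReal.toReal_nonneg, hx⟩

lemma toReal_klDiv_eq_integral_klFun {P Q : Measure α}
    [IsProbabilityMeasure P] [IsProbabilityMeasure Q] (hPQ : P ≪ Q) :
    (klDiv P Q).toReal = ∫ x, klFun (P.rnDeriv Q x).toReal ∂Q := by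
  rw [klDiv_eq_informationTheory_klDiv, InformationTheory.toReal_klDiv_eq_integral_klFun hPQ]

lemma klDiv_ne_top_of_rnDeriv_le {P Q : Measure α}
    [IsProbabilityMeasure P] [IsProbabilityMeasure Q] (hPQ : P ≪ Q) {c : ℝ}
    (hc : ∀ᵐ x ∂Q, (P.rnDeriv Q x).toReal ≤ c) :
    klDiv P Q ≠ ⊤ := by
  rw [klDiv_eq_informationTheory_klDiv]
  exact InformationTheory.klDiv_ne_top hPQ
    ((InformationTheory.integrable_klFun_rnDeriv_iff hPQ).mp (integrable_klFun_rnDeriv_of_le hc))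

lemma integral_mul_le_half_mul_integral_abs {μ : Measure α}
    {w g : α → ℝ} {C : ℝ} (hw : Integrable w μ) (hw0 : ∫ x, w x ∂μ = 0)
    (hg : AEStronglyMeasurable g μ) (hg0 : ∀ᵐ x ∂μ, 0 ≤ g x) (hgC : ∀ᵐ x ∂μ, g x ≤ C) :
    ∫ x, w x * g x ∂μ ≤ C / 2 * ∫ x, |w x| ∂μ := by
  have hwg : Integrable (fun x => w x * g x) μ := by
    refine hw.mul_bdd hg (c := C) ?_
    filter_upwards [hg0, hgC] with x h0 hC
    rwa [Real.norm_eq_abs, abs_of_nonneg h0]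
  calc ∫ x, w x * g x ∂μ ≤ ∫ x, C / 2 * (w x + |w x|) ∂μ := by
        refine integral_mono_ae hwg ((hw.add hw.abs).const_mul _) ?_
        filter_upwards [hg0, hgC] with x h0 hC
        rcases le_total 0 (w x) with hx | hx
        · rw [abs_of_nonneg hx]; nlinarith
        · rw [abs_of_nonpos hx]; nlinarith
    _ = C / 2 * ∫ x, |w x| ∂μ := by
        rw [integral_const_mul, integral_add hw hw.abs, hw0, zero_add]

lemma integral_abs_le_sqrt_integral_sq {μ : Measure α}
    [IsProbabilityMeasure μ] {f : α → ℝ} (hf : Integrable f μ)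
    (hf2 : Integrable (fun x => f x ^ 2) μ) :
    ∫ x, |f x| ∂μ ≤ √(∫ x, f x ^ 2 ∂μ) := by
  refine Real.le_sqrt_of_sq_le ?_
  simpa only [Function.comp_def, sq_abs] using (convexOn_pow 2).map_integral_le
    (continuousOn_pow 2) isClosed_Ici (.of_forall fun x => abs_nonneg (f x)) hf.abs
    (by simpa only [Function.comp_def, sq_abs] using hf2)

lemma integral_sub_integral_le_half_mul_integral_abs_rnDeriv_sub {P Q μ : Measure α}
    [IsProbabilityMeasure P] [IsProbabilityMeasure Q] [SigmaFinite μ]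
    (hP : P ≪ μ) (hQ : Q ≪ μ) {g : α → ℝ} {C : ℝ} (hg : AEStronglyMeasurable g μ)
    (hg0 : ∀ᵐ x ∂μ, 0 ≤ g x) (hgC : ∀ᵐ x ∂μ, g x ≤ C) :
    ∫ x, g x ∂P - ∫ x, g x ∂Q
      ≤ C / 2 * ∫ x, |(P.rnDeriv μ x).toReal - (Q.rnDeriv μ x).toReal| ∂μ := by
  have hu : Integrable (fun x => (P.rnDeriv μ x).toReal) μ := Measure.integrable_toReal_rnDeriv
  have hv : Integrable (fun x => (Q.rnDeriv μ x).toReal) μ := Measure.integrable_toReal_rnDeriv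
  have hbdd : ∀ᵐ x ∂μ, ‖g x‖ ≤ C := by
    filter_upwards [hg0, hgC] with x h0 hC
    rwa [Real.norm_eq_abs, abs_of_nonneg h0]
  rw [← integral_rnDeriv_smul hP, ← integral_rnDeriv_smul hQ]
  simp only [smul_eq_mul]
  rw [← integral_sub (hu.mul_bdd hg hbdd) (hv.mul_bdd hg hbdd)]
  simp only [← sub_mul]
  refine integral_mul_le_half_mul_integral_abs (hu.sub hv) ?_ hg hg0 hgC
  rw [integral_sub hu hv, Measure.integral_toReal_rnDeriv hP, Measure.integral_toReal_rnDeriv hQ]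
  simp

section Mixture

variable (P Q : Measure α)

lemma absolutelyContinuous_half_smul_add_left : P ≪ (2 : ℝ≥0∞)⁻¹ • (P + Q) :=
  (Measure.AbsolutelyContinuous.rfl.add_right Q).smul_right (by simp)

lemma absolutelyContinuous_half_smul_add_right : Q ≪ (2 : ℝ≥0∞)⁻¹ • (P + Q) :=
  (Measure.AbsolutelyContinuous.rfl.add_right' P).smul_right (by simp)

instance isFiniteMeasure_half_smul_add [IsFiniteMeasure P] [IsFiniteMeasure Q] :
    IsFiniteMeasure ((2 : ℝ≥0∞)⁻¹ • (P + Q)) :=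
  (P + Q).smul_finite (by simp)

instance isProbabilityMeasure_half_smul_add [IsProbabilityMeasure P] [IsProbabilityMeasure Q] :
    IsProbabilityMeasure ((2 : ℝ≥0∞)⁻¹ • (P + Q)) := by
  constructor
  simp [ENNReal.inv_two_add_inv_two]

lemma rnDeriv_add_rnDeriv_half_smul_add [IsFiniteMeasure P] [IsFiniteMeasure Q] :
    ∀ᵐ x ∂((2 : ℝ≥0∞)⁻¹ • (P + Q)),
      (P.rnDeriv ((2 : ℝ≥0∞)⁻¹ • (P + Q)) x).toReal
        + (Q.rnDeriv ((2 : ℝ≥0∞)⁻¹ • (P + Q)) x).toReal = 2 := by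
  set M := (2 : ℝ≥0∞)⁻¹ • (P + Q)
  have hPQ : P + Q = (2 : ℝ≥0∞) • M := by
    rw [smul_smul, ENNReal.mul_inv_cancel (by norm_num) (by norm_num), one_smul]
  filter_upwards [Measure.rnDeriv_add' P Q M,
    Measure.rnDeriv_smul_left_of_ne_top' M M (r := 2) (by norm_num), Measure.rnDeriv_self M,
    Measure.rnDeriv_lt_top P M, Measure.rnDeriv_lt_top Q M] with x hadd hsmul hself hP hQ
  rw [← ENNReal.toReal_add hP.ne hQ.ne, ← Pi.add_apply, ← hadd, hPQ, hsmul]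
  simp [hself]

lemma rnDeriv_half_smul_add_le_two [IsFiniteMeasure P] [IsFiniteMeasure Q] :
    ∀ᵐ x ∂((2 : ℝ≥0∞)⁻¹ • (P + Q)),
      (P.rnDeriv ((2 : ℝ≥0∞)⁻¹ • (P + Q)) x).toReal ≤ 2
        ∧ (Q.rnDeriv ((2 : ℝ≥0∞)⁻¹ • (P + Q)) x).toReal ≤ 2 := by
  filter_upwards [rnDeriv_add_rnDeriv_half_smul_add P Q] with x hx
  constructor <;> linarith [ENNReal.toReal_nonneg (a := P.rnDeriv ((2 : ℝ≥0∞)⁻¹ • (P + Q)) x),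
    ENNReal.toReal_nonneg (a := Q.rnDeriv ((2 : ℝ≥0∞)⁻¹ • (P + Q)) x)]

lemma integrable_sq_rnDeriv_sub_rnDeriv_half_smul_add [IsFiniteMeasure P] [IsFiniteMeasure Q] :
    Integrable (fun x => ((P.rnDeriv ((2 : ℝ≥0∞)⁻¹ • (P + Q)) x).toReal
      - (Q.rnDeriv ((2 : ℝ≥0∞)⁻¹ • (P + Q)) x).toReal) ^ 2) ((2 : ℝ≥0∞)⁻¹ • (P + Q)) := by
  refine Integrable.of_bound (by fun_prop) 4 ?_
  filter_upwards [rnDeriv_half_smul_add_le_two P Q] with x ⟨hu, hv⟩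
  rw [Real.norm_eq_abs, abs_of_nonneg (sq_nonneg _)]
  nlinarith [ENNReal.toReal_nonneg (a := P.rnDeriv ((2 : ℝ≥0∞)⁻¹ • (P + Q)) x),
    ENNReal.toReal_nonneg (a := Q.rnDeriv ((2 : ℝ≥0∞)⁻¹ • (P + Q)) x)]

variable [IsProbabilityMeasure P] [IsProbabilityMeasure Q]

lemma two_mul_toReal_jsDiv :
    2 * (jsDiv P Q).toReal
      = ∫ x, klFun (P.rnDeriv ((2 : ℝ≥0∞)⁻¹ • (P + Q)) x).toReal ∂((2 : ℝ≥0∞)⁻¹ • (P + Q))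
        + ∫ x, klFun (Q.rnDeriv ((2 : ℝ≥0∞)⁻¹ • (P + Q)) x).toReal ∂((2 : ℝ≥0∞)⁻¹ • (P + Q)) := by
  have hle := rnDeriv_half_smul_add_le_two P Q
  have hP := absolutelyContinuous_half_smul_add_left P Q
  have hQ := absolutelyContinuous_half_smul_add_right P Q
  rw [jsDiv, ENNReal.toReal_add
      (ENNReal.mul_ne_top (by simp) (klDiv_ne_top_of_rnDeriv_le hP (hle.mono fun _ h => h.1)))
      (ENNReal.mul_ne_top (by simp) (klDiv_ne_top_of_rnDeriv_le hQ (hle.mono fun _ h => h.2))),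
    ENNReal.toReal_mul, ENNReal.toReal_mul, toReal_klDiv_eq_integral_klFun hP,
    toReal_klDiv_eq_integral_klFun hQ]
  simp only [ENNReal.toReal_inv, ENNReal.toReal_ofNat]
  ring

lemma integral_sq_rnDeriv_sub_rnDeriv_le_eight_mul_toReal_jsDiv :
    ∫ x, ((P.rnDeriv ((2 : ℝ≥0∞)⁻¹ • (P + Q)) x).toReal
      - (Q.rnDeriv ((2 : ℝ≥0∞)⁻¹ • (P + Q)) x).toReal) ^ 2 ∂((2 : ℝ≥0∞)⁻¹ • (P + Q))
      ≤ 8 * (jsDiv P Q).toReal := by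
  set M := (2 : ℝ≥0∞)⁻¹ • (P + Q)
  have hle := rnDeriv_half_smul_add_le_two P Q
  rw [show 8 * (jsDiv P Q).toReal = 4 * (2 * (jsDiv P Q).toReal) by ring, two_mul_toReal_jsDiv,
    ← integral_add (integrable_klFun_rnDeriv_of_le (hle.mono fun _ h => h.1))
      (integrable_klFun_rnDeriv_of_le (hle.mono fun _ h => h.2)), ← integral_const_mul]
  refine integral_mono_ae (integrable_sq_rnDeriv_sub_rnDeriv_half_smul_add P Q)
    (((integrable_klFun_rnDeriv_of_le (hle.mono fun _ h => h.1)).add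
      (integrable_klFun_rnDeriv_of_le (hle.mono fun _ h => h.2))).const_mul 4) ?_
  filter_upwards [rnDeriv_add_rnDeriv_half_smul_add P Q, hle] with x hsum ⟨hu, hv⟩
  set u := (P.rnDeriv M x).toReal
  set v := (Q.rnDeriv M x).toReal
  have key := sq_le_klFun_one_add_add_klFun_one_sub (t := u - 1)
    (abs_le.mpr ⟨by linarith, by linarith⟩)
  rw [add_sub_cancel, show 1 - (u - 1) = v by linarith] at key
  have huv : u - v = 2 * (u - 1) := by linarith
  simp only [huv]
  linarith

end Mixture

end

theorem expErr_le_expErr_add_sqrt_jsDiv_general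
    {X Y 𝓟 : Type*} [MeasurableSpace X] [MeasurableSpace Y]
    (P Q : Measure (X × Y)) [IsProbabilityMeasure P] [IsProbabilityMeasure Q]
    (L : 𝓟 → Y → ℝ) (C : ℝ) (h : X → 𝓟)
    (hmeas : Measurable fun z : X × Y => L (h z.1) z.2)
    (hL0 : ∀ x y, 0 ≤ L (h x) y) (hLC : ∀ x y, L (h x) y ≤ C) :
    expErr L P h ≤ expErr L Q h + Real.sqrt 2 * C * Real.sqrt (jsDiv P Q).toReal := by
  set M := (2 : ℝ≥0∞)⁻¹ • (P + Q)
  set w : X × Y → ℝ := fun z => (P.rnDeriv M z).toReal - (Q.rnDeriv M z).toReal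
  obtain ⟨z⟩ := nonempty_of_isProbabilityMeasure P
  have hC : 0 ≤ C := (hL0 z.1 z.2).trans (hLC z.1 z.2)
  calc expErr L P h = expErr L Q h + (expErr L P h - expErr L Q h) := by ring
    _ ≤ expErr L Q h + C / 2 * ∫ z, |w z| ∂M := by
        gcongr
        exact integral_sub_integral_le_half_mul_integral_abs_rnDeriv_sub
          (absolutelyContinuous_half_smul_add_left P Q)
          (absolutelyContinuous_half_smul_add_right P Q) hmeas.aestronglyMeasurable
          (.of_forall fun z => hL0 z.1 z.2) (.of_forall fun z => hLC z.1 z.2)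
    _ ≤ expErr L Q h + C / 2 * √(∫ z, w z ^ 2 ∂M) := by
        gcongr
        exact integral_abs_le_sqrt_integral_sq
          (Measure.integrable_toReal_rnDeriv.sub Measure.integrable_toReal_rnDeriv)
          (integrable_sq_rnDeriv_sub_rnDeriv_half_smul_add P Q)
    _ ≤ expErr L Q h + C / 2 * √(8 * (jsDiv P Q).toReal) := by
        gcongr
        exact integral_sq_rnDeriv_sub_rnDeriv_le_eight_mul_toReal_jsDiv P Q
    _ = expErr L Q h + √2 * C * √(jsDiv P Q).toReal := by
        rw [show (8 : ℝ) = 2 ^ 2 * 2 by norm_num, Real.sqrt_mul (by positivity),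
          Real.sqrt_mul (by positivity), Real.sqrt_sq (by norm_num)]
        ring

/-- **Lemma 1.** For probability measures `P`, `Q` on `X × Y` and a
classifier `h` whose loss is bounded in `[0, C]`:
`ε_P(h) ≤ ε_Q(h) + √2 · C · (D_JS(P ‖ Q))^{1/2}`. -/
theorem expErr_le_expErr_add_sqrt_jsDiv
    {X Y 𝓟 : Type*} [MeasurableSpace X] [MeasurableSpace Y]
    (P Q : Measure (X × Y)) [IsProbabilityMeasure P] [IsProbabilityMeasure Q]
    (L : 𝓟 → Y → ℝ) (C : ℝ) (hC : 0 < C) (h : X → 𝓟)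
    (hmeas : Measurable fun z : X × Y => L (h z.1) z.2)
    (hL0 : ∀ x y, 0 ≤ L (h x) y) (hLC : ∀ x y, L (h x) y ≤ C) :
    expErr L P h ≤ expErr L Q h + Real.sqrt 2 * C * Real.sqrt (jsDiv P Q).toReal :=
  expErr_le_expErr_add_sqrt_jsDiv_general P Q L C h hmeas hL0 hLC
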